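/- Fix H < 1/2, T > 0, and two integers n > m ≥ 2, and for each j ≥ 0 let k(j) = max{i ≥ 0 : i/m ≤ j/n}. Then there is a constant C depending only on T and H such that the sum over j = 0, …, ⌊nT⌋ - 1 of |E[(B^H_{(j+1)/n} - B^H_{j/n}) · ((B^H_{j/n} + B^H_{(j+1)/n})/2 - B^H_{k(j)/m})]| is at most C m^{1-2H}. -/

import Mathlib

/-!
With `t_j = j/n`, `c_j = k(j)/m` and `α = 2H`, the covariance turns the `j`-th expectation into
`((t_{j+1} - c_j)^α - (t_j - c_j)^α)/2 ≥ 0`. Subadditivity of `x ↦ x^α` (as `α ≤ 1`) bounds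
`(t_{j+1} - c_j)^α` by `(t_{j+1} - c_{j+1})^α + (c_{j+1} - c_j)^α`, so the sum telescopes to at most
`(t_J - c_J)^α + ∑ (c_{j+1} - c_j)^α` with `J = ⌊nT⌋`. The first term is at most `m^{-α}`, and since `m < n` the
coarse point `c_j` advances by `0` or `1/m` at each step, so the second is `k(J) m^{-α} ≤ T m^{1-α}`.
-/

open MeasureTheory Real

/-- Covariance function of fractional Brownian motion with Hurst parameter `H`. -/
noncomputable def fbmCov (H s t : ℝ) : ℝ :=
  (s ^ (2*H) + t ^ (2*H) - |t - s| ^ (2*H)) / 2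

lemma integral_increment_mul_midpoint_sub {ι Ω : Type*} [MeasurableSpace Ω] {P : Measure Ω}
    {X : ι → Ω → ℝ} (hint : ∀ s t, Integrable (fun ω => X s ω * X t ω) P) (a b c : ι) :
    ∫ ω, (X b ω - X a ω) * ((X a ω + X b ω) / 2 - X c ω) ∂P =
      ((∫ ω, X b ω * X b ω ∂P) - ∫ ω, X a ω * X a ω ∂P) / 2
        - (∫ ω, X b ω * X c ω ∂P) + ∫ ω, X a ω * X c ω ∂P := by
  have hsq : Integrable (fun ω => (X b ω * X b ω - X a ω * X a ω) / 2) P :=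
    ((hint b b).sub (hint a a)).div_const 2
  calc ∫ ω, (X b ω - X a ω) * ((X a ω + X b ω) / 2 - X c ω) ∂P
      = ∫ ω, (X b ω * X b ω - X a ω * X a ω) / 2 - X b ω * X c ω + X a ω * X c ω ∂P := by
        congr 1; funext ω; ring
    _ = _ := by
        rw [integral_add ?_ (hint a c), integral_sub hsq (hint b c), integral_div,
          integral_sub (hint b b) (hint a a)]
        exact hsq.sub (hint b c)

lemma fbmCov_self {H : ℝ} (hH : H ≠ 0) (t : ℝ) : fbmCov H t t = t ^ (2 * H) := by
  simp [fbmCov, zero_rpow (mul_ne_zero two_ne_zero hH)]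

lemma fbmCov_of_le {H s t : ℝ} (hst : s ≤ t) :
    fbmCov H t s = (t ^ (2 * H) + s ^ (2 * H) - (t - s) ^ (2 * H)) / 2 := by
  rw [fbmCov, abs_sub_comm, abs_of_nonneg (sub_nonneg.2 hst)]

lemma integral_fbm_increment_mul_midpoint_sub {Ω : Type*} [MeasurableSpace Ω] {P : Measure Ω}
    {H : ℝ} (hH : H ≠ 0) {B : ℝ → Ω → ℝ}
    (hint : ∀ s t : ℝ, Integrable (fun ω => B s ω * B t ω) P)
    (hcov : ∀ s t : ℝ, 0 ≤ s → 0 ≤ t → ∫ ω, B s ω * B t ω ∂P = fbmCov H s t)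
    {a b c : ℝ} (hc : 0 ≤ c) (hca : c ≤ a) (hab : a ≤ b) :
    ∫ ω, (B b ω - B a ω) * ((B a ω + B b ω) / 2 - B c ω) ∂P
      = ((b - c) ^ (2 * H) - (a - c) ^ (2 * H)) / 2 := by
  have ha : 0 ≤ a := hc.trans hca
  have hb : 0 ≤ b := ha.trans hab
  rw [integral_increment_mul_midpoint_sub hint, hcov b b hb hb, hcov a a ha ha, hcov b c hb hc,
    hcov a c ha hc, fbmCov_self hH, fbmCov_self hH, fbmCov_of_le (hca.trans hab),
    fbmCov_of_le hca]
  ring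

lemma sum_rpow_sub_rpow_le {α : ℝ} (hα0 : 0 ≤ α) (hα1 : α ≤ 1) {t c : ℕ → ℝ}
    (hct : ∀ j, c j ≤ t j) (hc : Monotone c) (J : ℕ) :
    ∑ j ∈ Finset.range J, ((t (j + 1) - c j) ^ α - (t j - c j) ^ α)
      ≤ (t J - c J) ^ α + ∑ j ∈ Finset.range J, (c (j + 1) - c j) ^ α := by
  set g : ℕ → ℝ := fun j => (t j - c j) ^ α
  have hstep : ∀ j, (t (j + 1) - c j) ^ α ≤ g (j + 1) + (c (j + 1) - c j) ^ α := fun j => by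
    have h := rpow_add_le_add_rpow (sub_nonneg.2 (hct (j + 1)))
      (sub_nonneg.2 (hc j.le_succ)) hα0 hα1
    rwa [sub_add_sub_cancel] at h
  calc ∑ j ∈ Finset.range J, ((t (j + 1) - c j) ^ α - g j)
      ≤ ∑ j ∈ Finset.range J, ((g (j + 1) - g j) + (c (j + 1) - c j) ^ α) :=
        Finset.sum_le_sum fun j _ => by linarith [hstep j]
    _ = g J - g 0 + ∑ j ∈ Finset.range J, (c (j + 1) - c j) ^ α := by
        rw [Finset.sum_add_distrib, Finset.sum_range_sub]
    _ ≤ g J + ∑ j ∈ Finset.range J, (c (j + 1) - c j) ^ α := by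
        have : 0 ≤ g 0 := rpow_nonneg (sub_nonneg.2 (hct 0)) α
        linarith

lemma sum_rpow_unit_steps {α r : ℝ} (hα : α ≠ 0) (hr : 0 ≤ r) {k : ℕ → ℕ}
    (hk : ∀ j, k (j + 1) = k j ∨ k (j + 1) = k j + 1) (J : ℕ) :
    ∑ j ∈ Finset.range J, ((k (j + 1) : ℝ) / r - k j / r) ^ α = ((k J : ℝ) - k 0) / r ^ α := by
  have hterm : ∀ j, ((k (j + 1) : ℝ) / r - k j / r) ^ α = ((k (j + 1) : ℝ) - k j) / r ^ α := by
    intro j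
    rcases hk j with h | h <;> rw [h]
    · simp [zero_rpow hα]
    · push_cast
      rw [add_div, add_sub_cancel_left, add_sub_cancel_left, div_rpow zero_le_one hr, one_rpow]
  simp_rw [hterm, ← Finset.sum_div, Finset.sum_range_sub (fun j => (k j : ℝ))]

lemma succ_mul_div_eq_or {m n : ℕ} (hmn : m ≤ n) (hn : 0 < n) (j : ℕ) :
    (j + 1) * m / n = j * m / n ∨ (j + 1) * m / n = j * m / n + 1 := by
  have hmono : j * m / n ≤ (j + 1) * m / n := Nat.div_le_div_right (by gcongr; omega)
  have hstep : (j + 1) * m / n ≤ j * m / n + 1 :=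
    calc (j + 1) * m / n ≤ (j * m + n) / n := Nat.div_le_div_right (by rw [add_mul]; omega)
      _ = j * m / n + 1 := Nat.add_div_right _ hn
  omega

/-- The paper's `k(j)/m`: the last point of the grid `ℕ/m` that does not exceed `j/n`. -/
noncomputable def coarsePoint (m n j : ℕ) : ℝ := ((j * m / n : ℕ) : ℝ) / m

section coarsePoint

variable {m n : ℕ}

lemma coarsePoint_nonneg (j : ℕ) : 0 ≤ coarsePoint m n j := by
  unfold coarsePoint; positivity

lemma coarsePoint_le (hm : 0 < m) (hn : 0 < n) (j : ℕ) : coarsePoint m n j ≤ j / n := by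
  rw [coarsePoint, div_le_div_iff₀ (by positivity) (by positivity)]
  exact_mod_cast Nat.div_mul_le_self (j * m) n

lemma sub_coarsePoint_le (hm : 0 < m) (hn : 0 < n) (j : ℕ) :
    (j : ℝ) / n - coarsePoint m n j ≤ (m : ℝ)⁻¹ := by
  have hlt : (j : ℝ) * m < n * (((j * m / n : ℕ) : ℝ) + 1) := by
    exact_mod_cast Nat.lt_mul_div_succ (j * m) hn
  rw [coarsePoint, div_sub_div _ _ (by positivity) (by positivity), div_le_iff₀ (by positivity)]
  field_simp
  nlinarith

lemma coarsePoint_mono : Monotone (coarsePoint m n) := fun i j hij => by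
  unfold coarsePoint; gcongr

lemma sum_rpow_coarsePoint_sub {α : ℝ} (hα : α ≠ 0) (hmn : m ≤ n) (hn : 0 < n) (J : ℕ) :
    ∑ j ∈ Finset.range J, (coarsePoint m n (j + 1) - coarsePoint m n j) ^ α
      = ((J * m / n : ℕ) : ℝ) / (m : ℝ) ^ α := by
  simpa [coarsePoint] using sum_rpow_unit_steps (k := fun j => j * m / n) hα (Nat.cast_nonneg m)
    (succ_mul_div_eq_or hmn hn) J

lemma natCast_mul_div_le_mul {J : ℕ} {T : ℝ} (hn : 0 < n) (hJ : (J : ℝ) ≤ n * T) :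
    ((J * m / n : ℕ) : ℝ) ≤ T * m := by
  calc ((J * m / n : ℕ) : ℝ) ≤ (J * m / n : ℝ) := by exact_mod_cast Nat.cast_div_le
    _ ≤ (n * T * m / n : ℝ) := by gcongr
    _ = T * m := by field_simp

lemma sum_rpow_sub_coarsePoint_le {α T : ℝ} (hα0 : 0 < α) (hα1 : α ≤ 1) (hT : 0 ≤ T)
    (hm : 0 < m) (hmn : m ≤ n) :
    ∑ j ∈ Finset.range ⌊(n : ℝ) * T⌋₊,
        ((((j : ℝ) + 1) / n - coarsePoint m n j) ^ α - ((j : ℝ) / n - coarsePoint m n j) ^ α)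
      ≤ (T * m + 1) / (m : ℝ) ^ α := by
  have hn : 0 < n := hm.trans_le hmn
  set J := ⌊(n : ℝ) * T⌋₊
  have hgap : ((J : ℝ) / n - coarsePoint m n J) ^ α ≤ 1 / (m : ℝ) ^ α := by
    rw [one_div, ← inv_rpow (Nat.cast_nonneg m)]
    exact rpow_le_rpow (sub_nonneg.2 (coarsePoint_le hm hn J)) (sub_coarsePoint_le hm hn J)
      hα0.le
  have hjumps : ((J * m / n : ℕ) : ℝ) ≤ T * m :=
    natCast_mul_div_le_mul hn (Nat.floor_le (by positivity))
  have htele := sum_rpow_sub_rpow_le hα0.le hα1 (t := fun j => (j : ℝ) / n)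
    (coarsePoint_le hm hn) coarsePoint_mono J
  simp only [Nat.cast_succ] at htele
  calc _ ≤ ((J : ℝ) / n - coarsePoint m n J) ^ α
        + ∑ j ∈ Finset.range J, (coarsePoint m n (j + 1) - coarsePoint m n j) ^ α := htele
    _ ≤ 1 / (m : ℝ) ^ α + T * m / (m : ℝ) ^ α := by
        rw [sum_rpow_coarsePoint_sub hα0.ne' hmn hn]; gcongr
    _ = (T * m + 1) / (m : ℝ) ^ α := by ring

end coarsePoint

theorem fbm_two_partitions_bound_two_general {Ω : Type*} [MeasurableSpace Ω] (P : Measure Ω)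
    (H : ℝ) (hH0 : 0 < H) (hH : H < 1/2)
    (B : ℝ → Ω → ℝ)
    (hint : ∀ s t : ℝ, Integrable (fun ω => B s ω * B t ω) P)
    (hcov : ∀ s t : ℝ, 0 ≤ s → 0 ≤ t → ∫ ω, B s ω * B t ω ∂P = fbmCov H s t)
    (T : ℝ) (hT : 0 < T) :
    ∃ C > 0, ∀ m n : ℕ, 2 ≤ m → m < n →
      ∑ j ∈ Finset.range ⌊(n:ℝ)*T⌋₊,
        |∫ ω, (B (((j:ℝ)+1)/n) ω - B ((j:ℝ)/n) ω) *
              ((B ((j:ℝ)/n) ω + B (((j:ℝ)+1)/n) ω)/2 - B ((((j*m)/n : ℕ) : ℝ)/m) ω) ∂P|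
      ≤ C * (m : ℝ) ^ (1 - 2*H) := by
  refine ⟨T + 1, by linarith, fun m n hm hmn => ?_⟩
  have hm0 : 0 < m := by omega
  have hn0 : 0 < n := by omega
  have hterm : ∀ j : ℕ, |∫ ω, (B (((j:ℝ)+1)/n) ω - B ((j:ℝ)/n) ω) *
        ((B ((j:ℝ)/n) ω + B (((j:ℝ)+1)/n) ω)/2 - B (coarsePoint m n j) ω) ∂P|
      = ((((j : ℝ) + 1) / n - coarsePoint m n j) ^ (2 * H)
          - ((j : ℝ) / n - coarsePoint m n j) ^ (2 * H)) / 2 := fun j => by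
    have hca := coarsePoint_le hm0 hn0 j
    have hab : (j : ℝ) / n ≤ ((j : ℝ) + 1) / n := by gcongr; linarith
    rw [integral_fbm_increment_mul_midpoint_sub hH0.ne' hint hcov (coarsePoint_nonneg j) hca hab,
      abs_of_nonneg]
    have := rpow_le_rpow (sub_nonneg.2 hca) (sub_le_sub_right hab _) (by linarith : 0 ≤ 2 * H)
    linarith
  have hm1 : (1 : ℝ) ≤ m := by exact_mod_cast hm0
  calc _ = (∑ j ∈ Finset.range ⌊(n : ℝ) * T⌋₊, ((((j : ℝ) + 1) / n - coarsePoint m n j) ^ (2 * H)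
          - ((j : ℝ) / n - coarsePoint m n j) ^ (2 * H))) / 2 := by
        rw [Finset.sum_div]; exact Finset.sum_congr rfl fun j _ => hterm j
    _ ≤ (T * m + 1) / (m : ℝ) ^ (2 * H) / 2 := by
        gcongr
        exact sum_rpow_sub_coarsePoint_le (by linarith) (by linarith) hT.le hm0 hmn.le
    _ ≤ (T + 1) * m / (m : ℝ) ^ (2 * H) := by rw [div_right_comm]; gcongr; nlinarith
    _ = (T + 1) * (m : ℝ) ^ (1 - 2 * H) := by
        rw [rpow_one_sub' (Nat.cast_nonneg m) (by linarith)]; ring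

theorem fbm_two_partitions_bound_two {Ω : Type*} [MeasurableSpace Ω] (P : Measure Ω)
    [IsProbabilityMeasure P]
    (H : ℝ) (hH0 : 0 < H) (hH : H < 1/2)
    (B : ℝ → Ω → ℝ)
    (hint : ∀ s t : ℝ, Integrable (fun ω => B s ω * B t ω) P)
    (hcov : ∀ s t : ℝ, 0 ≤ s → 0 ≤ t → ∫ ω, B s ω * B t ω ∂P = fbmCov H s t)
    (T : ℝ) (hT : 0 < T) :
    ∃ C > 0, ∀ m n : ℕ, 2 ≤ m → m < n →
      ∑ j ∈ Finset.range ⌊(n:ℝ)*T⌋₊,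
        |∫ ω, (B (((j:ℝ)+1)/n) ω - B ((j:ℝ)/n) ω) *
              ((B ((j:ℝ)/n) ω + B (((j:ℝ)+1)/n) ω)/2 - B ((((j*m)/n : ℕ) : ℝ)/m) ω) ∂P|
      ≤ C * (m : ℝ) ^ (1 - 2*H) :=
  fbm_two_partitions_bound_two_general P H hH0 hH B hint hcov T hT
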